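/- Let G : ℕ → ℝ be a fuzzy initial segment (0 ≤ G(n) ≤ 1 for all n, G(0) = 1, G antitone, and G(n) = 1 implies G(n+1) > 0) such that G(2) = 1 and G is weakly closed under multiplication (for all a, b, G(a) = 1 and G(b) = 1 imply G(a·b) > 0). Then G^s(n) = G(2^n) is itself a fuzzy initial segment: 0 ≤ G^s(n) ≤ 1 for all n, G^s(0) = 1, G^s is antitone, and for all n, G^s(n) = 1 implies G^s(n+1) > 0. -/
import Mathlib


/-- If `G` is a fuzzy initial segment with `G 2 = 1` which is weakly closed
under multiplication, then `G^s n = G (2^n)` is itself a fuzzy initial segment. -/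
theorem stmt_7 (G : ℕ → ℝ) (hrange : ∀ n, 0 ≤ G n ∧ G n ≤ 1)
    (h0 : G 0 = 1) (hanti : ∀ m n, m ≤ n → G n ≤ G m)
    (hnojump : ∀ n, G n = 1 → 0 < G (n + 1))
    (h2 : G 2 = 1) (hmul : ∀ a b, G a = 1 → G b = 1 → 0 < G (a * b)) :
    let Gs : ℕ → ℝ := fun n => G (2 ^ n)
    (∀ n, 0 ≤ Gs n ∧ Gs n ≤ 1) ∧
    Gs 0 = 1 ∧
    (∀ m n, m ≤ n → Gs n ≤ Gs m) ∧
    (∀ n, Gs n = 1 → 0 < Gs (n + 1)) := by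
  intro Gs
  refine ⟨fun n => hrange _, ?_, fun m n h => hanti _ _ (pow_le_pow_right₀ one_le_two h), ?_⟩
  · have : G 1 = 1 := le_antisymm (hrange 1).2 (h2 ▸ hanti 1 2 one_le_two)
    simpa [Gs] using this
  · intro n hn
    have := hmul (2 ^ n) 2 hn h2
    simpa [Gs, pow_succ] using this
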